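/- arXiv:2406.20071 — 3 statements merged into one kernel-verified Lean document; each statement's English description precedes it below -/
import Mathlib

section
/- If N = p*q with q ≤ p < 2q and p, q positive integers, then p + q < (3/2)*sqrt(2*N). -/
theorem stmt_1 (N p q : ℕ) (hN0 : 0 < N) (hp0 : 0 < p) (hq0 : 0 < q)
    (hN : N = p * q) (hqp : q ≤ p) (hp2q : p < 2 * q) :
    (p + q : ℝ) < 3 * Real.sqrt (2 * N) / 2 := by
  have hs : Real.sqrt (2 * N) ^ 2 = 2 * N := Real.sq_sqrt (by positivity)
  have hs0 : 0 ≤ Real.sqrt (2 * N) := Real.sqrt_nonneg _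
  have h1 : (q : ℝ) ≤ p := by exact_mod_cast hqp
  have h2 : (p : ℝ) < 2 * q := by exact_mod_cast hp2q
  have h3 : (0 : ℝ) < q := by exact_mod_cast hq0
  have hNr : (N : ℝ) = p * q := by exact_mod_cast hN
  nlinarith [sq_nonneg (Real.sqrt (2 * N) - (p + q)), sq_nonneg ((p:ℝ) - q), mul_pos h3 h3, sq_nonneg (3 * Real.sqrt (2 * N) - 2 * ((p:ℝ) + q))]
end

section
/- Let N = p*q with q ≤ p < 2q and suppose d satisfies 3d + 2(p+q) = 2N + 3. Then with d̃ = ⌊(2N+3)/3⌋, one has 0 ≤ d̃ - d < sqrt(2N). -/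
theorem stmt_4 (N p q d : ℕ) (hN0 : 0 < N) (hp0 : 0 < p) (hq0 : 0 < q) (hd0 : 0 < d)
    (hN : N = p * q) (hqp : q ≤ p) (hp2q : p < 2 * q)
    (hd : 3 * d + 2 * (p + q) = 2 * N + 3) :
    d ≤ (2 * N + 3) / 3 ∧ (((2 * N + 3) / 3 : ℕ) : ℝ) - d < Real.sqrt (2 * N) := by
  have hle : d ≤ (2 * N + 3) / 3 := Nat.le_div_iff_mul_le (by norm_num) |>.2 (by omega)
  refine ⟨hle, ?_⟩
  have h3 : 3 * ((2 * N + 3) / 3) ≤ 2 * N + 3 := Nat.mul_div_le _ _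
  -- cast facts
  have hdiff : (((2 * N + 3) / 3 : ℕ) : ℝ) - d ≤ (2 * (p + q) : ℝ) / 3 := by
    rw [le_div_iff₀ (by norm_num : (0:ℝ) < 3)]
    have : (3:ℝ) * ((2 * N + 3) / 3 : ℕ) ≤ 2 * N + 3 := by exact_mod_cast h3
    have hd' : (3:ℝ) * d + 2 * (p + q) = 2 * N + 3 := by exact_mod_cast hd
    nlinarith
  have hsq : (2 * (p + q) : ℝ) / 3 < Real.sqrt (2 * N) := by
    rw [← Real.sqrt_sq (by positivity : (0:ℝ) ≤ (2 * (p + q) : ℝ) / 3)]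
    apply Real.sqrt_lt_sqrt (by positivity)
    have hp' : (q : ℝ) ≤ p := by exact_mod_cast hqp
    have hq' : (p : ℝ) < 2 * q := by exact_mod_cast hp2q
    have hp0' : (0:ℝ) < p := by exact_mod_cast hp0
    have hq0' : (0:ℝ) < q := by exact_mod_cast hq0
    have hN' : (N : ℝ) = p * q := by exact_mod_cast hN
    rw [hN']
    nlinarith [mul_pos (by linarith : (0:ℝ) < 2*p - q) (by linarith : (0:ℝ) < 2*q - p)]
  calc (((2 * N + 3) / 3 : ℕ) : ℝ) - d ≤ (2 * (p + q) : ℝ) / 3 := hdiff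
    _ < Real.sqrt (2 * N) := hsq
end

section
/- Let N = p*q be a product of two distinct primes with 3 ∤ (p-1)*(q-1). Then 3 is invertible modulo (p-1)*(q-1), and the maps x ↦ x^3 mod N and x ↦ x^d mod N are mutually inverse on ZMod N, where d is the inverse of 3 modulo (p-1)*(q-1). -/
lemma aux_pow (p e : ℕ) (hp : p.Prime) (he : 1 ≤ e) (hdvd : (p - 1) ∣ (e - 1)) :
    ∀ x : ZMod p, x ^ e = x := by
  intro x
  haveI : Fact p.Prime := ⟨hp⟩
  obtain ⟨k, hk⟩ := hdvd
  have he' : e = (p - 1) * k + 1 := by omega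
  by_cases hx : x = 0
  · subst hx
    rw [zero_pow (by omega)]
  · rw [he', pow_add, pow_one, pow_mul, ZMod.pow_card_sub_one_eq_one hx, one_pow, one_mul]

theorem stmt_10 (p q : ℕ) (hp : p.Prime) (hq : q.Prime) (hpq : p ≠ q)
    (d : ℕ) (hd : 3 * d ≡ 1 [MOD (p - 1) * (q - 1)]) :
    ∀ x : ZMod (p * q), (x ^ 3) ^ d = x := by
  intro x
  have hm : (p - 1) * (q - 1) ≠ 1 ∨ True := Or.inr trivial
  have hd1 : 1 ≤ 3 * d := by
    rcases Nat.eq_zero_or_pos d with h | h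
    · exfalso
      subst h
      simp only [Nat.mul_zero] at hd
      have : (p - 1) * (q - 1) ∣ 1 := (Nat.modEq_zero_iff_dvd.mp hd.symm)
      have h12 : (p-1)*(q-1) = 1 := Nat.eq_one_of_dvd_one this
      have h13 := Nat.eq_one_of_mul_eq_one_right h12
      have h14 := Nat.eq_one_of_mul_eq_one_left h12
      have := hp.two_le; have := hq.two_le
      omega
    · omega
  have hdvdm : (p - 1) * (q - 1) ∣ (3 * d - 1) := (Nat.modEq_iff_dvd' hd1).mp hd.symm
  have hdp : (p - 1) ∣ (3 * d - 1) := (Dvd.intro _ rfl).trans hdvdm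
  have hdq : (q - 1) ∣ (3 * d - 1) := (Dvd.intro_left _ rfl).trans hdvdm
  have hcop : Nat.Coprime p q := (Nat.coprime_primes hp hq).mpr hpq
  rw [← pow_mul]
  have key := (ZMod.chineseRemainder hcop).injective
  apply key
  rw [map_pow]
  have hP : ∀ y : ZMod p × ZMod q, y ^ (3 * d) = y := by
    intro y
    ext
    · exact aux_pow p _ hp hd1 hdp y.1
    · exact aux_pow q _ hq hd1 hdq y.2
  exact hP _
end
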